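/- Let q and c be real numbers with 0 < q ≤ 1 and c ≥ 0, and let m ≥ 1 be an integer. Then 1 - ((1-q) + q·e^{-c/m})^m ≥ q(1 - e^{-c}); equivalently, ((1-q) + q·e^{-c/m})^m ≤ (1-q) + q·e^{-c}. -/
import Mathlib


/-- The probability of receiving at least one gossip update is minimized
at `m = 1`: for `0 < q ≤ 1`, `c ≥ 0`, `m ≥ 1`,
`1 - ((1-q) + q e^{-c/m})^m ≥ q(1 - e^{-c})`, equivalently
`((1-q) + q e^{-c/m})^m ≤ (1-q) + q e^{-c}`. -/
theorem stmt_10 (q c : ℝ) (hq0 : 0 < q) (hq1 : q ≤ 1) (hc : 0 ≤ c)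
    (m : ℕ) (hm : 1 ≤ m) :
    q * (1 - Real.exp (-c)) ≤ 1 - ((1 - q) + q * Real.exp (-c / m)) ^ m ∧
      ((1 - q) + q * Real.exp (-c / m)) ^ m ≤ (1 - q) + q * Real.exp (-c) := by
  have hm0 : (m : ℝ) ≠ 0 := by positivity
  have hx : (0:ℝ) ≤ Real.exp (-c / m) := (Real.exp_pos _).le
  have hxm : (Real.exp (-c / m)) ^ m = Real.exp (-c) := by
    rw [← Real.exp_nat_mul]
    congr 1
    field_simp
  have hconv := (convexOn_pow m).2 (Set.mem_Ici.mpr zero_le_one)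
    (Set.mem_Ici.mpr hx) (by linarith : (0:ℝ) ≤ 1 - q) hq0.le (by ring)
  simp only [smul_eq_mul, mul_one, one_pow] at hconv
  rw [hxm] at hconv
  refine ⟨by linarith, hconv⟩
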